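/- For every bounded function f : ℤ → ℝ, the change-of-variable identities ∑_{z∈ℤ} μ^{(θ)}(z)·r(z)·f(z−1) = e^{θ} · ∑_{z∈ℤ} μ^{(θ)}(z)·f(z) and ∑_{z∈ℤ} μ^{(θ)}(z)·r(−z)·f(z+1) = e^{−θ} · ∑_{z∈ℤ} μ^{(θ)}(z)·f(z) hold, with all families summable. -/
import Mathlib


open Real

/-- The generalized factorial `r(z)! := ∏_{y=1}^{|z|} r(y)`. -/
noncomputable def rfact (r : ℤ → ℝ) (z : ℤ) : ℝ :=
  ∏ y ∈ Finset.range z.natAbs, r (y + 1)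

/-- The partition function `Z(θ) := ∑_{z ∈ ℤ} e^{θ z} / r(z)!`. -/
noncomputable def Zfun (r : ℤ → ℝ) (θ : ℝ) : ℝ :=
  ∑' z : ℤ, Real.exp (θ * z) / rfact r z

/-- The single-site probability mass function `μ^{(θ)}(z) := e^{θ z} / (Z(θ) r(z)!)`. -/
noncomputable def mu (r : ℤ → ℝ) (θ : ℝ) (z : ℤ) : ℝ :=
  Real.exp (θ * z) / (Zfun r θ * rfact r z)

lemma rfact_pos (r : ℤ → ℝ) (hpos : ∀ z : ℤ, 0 < r z) (z : ℤ) : 0 < rfact r z :=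
  Finset.prod_pos (fun _ _ => hpos _)

lemma rfact_step (r : ℤ → ℝ) (hpos : ∀ z : ℤ, 0 < r z)
    (hrel : ∀ z : ℤ, r z * r (-z + 1) = 1) (z : ℤ) :
    rfact r z = rfact r (z - 1) * r z := by
  rcases le_or_gt 1 z with h | h
  · have hz : z.natAbs = (z - 1).natAbs + 1 := by omega
    have hc : ((z - 1).natAbs : ℤ) = z - 1 := Int.natAbs_of_nonneg (by omega)
    rw [rfact, hz, Finset.prod_range_succ, hc]
    show rfact r (z - 1) * r (z - 1 + 1) = rfact r (z - 1) * r z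
    rw [sub_add_cancel]
  · have hz : (z - 1).natAbs = z.natAbs + 1 := by omega
    have hc : (z.natAbs : ℤ) = -z := by omega
    have : rfact r (z - 1) = rfact r z * r (-z + 1) := by
      rw [rfact, hz, Finset.prod_range_succ, hc]; rfl
    rw [this, mul_assoc, mul_comm (r (-z + 1)), hrel z, mul_one]

lemma mu_step (r : ℤ → ℝ) (hpos : ∀ z : ℤ, 0 < r z)
    (hrel : ∀ z : ℤ, r z * r (-z + 1) = 1) (θ : ℝ) (z : ℤ) :
    mu r θ z * r z = Real.exp θ * mu r θ (z - 1) := by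
  have hr := (hpos z).ne'
  have hexp : Real.exp (θ * z) = Real.exp θ * Real.exp (θ * (z - 1)) := by
    rw [← Real.exp_add]
    congr 1
    push_cast
    ring
  rw [mu, mu, rfact_step r hpos hrel z, hexp]
  push_cast
  rw [show Zfun r θ * (rfact r (z - 1) * r z)
      = Zfun r θ * rfact r (z - 1) * r z from by ring]
  rw [div_mul_eq_mul_div, mul_div_mul_right _ _ hr]
  ring

set_option maxHeartbeats 1000000 in
theorem change_of_variable (r : ℤ → ℝ) (hpos : ∀ z : ℤ, 0 < r z)
    (hrel : ∀ z : ℤ, r z * r (-z + 1) = 1) (θ : ℝ)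
    (hZ : Summable (fun z : ℤ => Real.exp (θ * z) / rfact r z))
    (f : ℤ → ℝ) (hf : ∃ M : ℝ, ∀ z : ℤ, |f z| ≤ M) :
    Summable (fun z : ℤ => mu r θ z * r z * f (z - 1)) ∧
    Summable (fun z : ℤ => mu r θ z * r (-z) * f (z + 1)) ∧
    Summable (fun z : ℤ => mu r θ z * f z) ∧
    (∑' z : ℤ, mu r θ z * r z * f (z - 1)) =
      Real.exp θ * ∑' z : ℤ, mu r θ z * f z ∧
    (∑' z : ℤ, mu r θ z * r (-z) * f (z + 1)) =
      Real.exp (-θ) * ∑' z : ℤ, mu r θ z * f z := by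
  obtain ⟨M, hM⟩ := hf
  have hM0 : 0 ≤ M := (abs_nonneg _).trans (hM 0)
  have key1 : ∀ z : ℤ, mu r θ z * r z = Real.exp θ * mu r θ (z - 1) :=
    mu_step r hpos hrel θ
  have key2 : ∀ z : ℤ, mu r θ z * r (-z) = Real.exp (-θ) * mu r θ (z + 1) := by
    intro z
    have h := mu_step r hpos hrel θ (z + 1)
    simp only [add_sub_cancel_right] at h
    have hrz : r (z + 1) * r (-z) = 1 := by
      have := hrel (z + 1); simpa using this
    have : mu r θ z = Real.exp (-θ) * (mu r θ (z + 1) * r (z + 1)) := by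
      rw [h, ← mul_assoc, ← Real.exp_add]
      simp
    rw [this]
    calc Real.exp (-θ) * (mu r θ (z + 1) * r (z + 1)) * r (-z)
        = Real.exp (-θ) * mu r θ (z + 1) * (r (z + 1) * r (-z)) := by ring
      _ = Real.exp (-θ) * mu r θ (z + 1) := by rw [hrz, mul_one]
  -- mu is summable and nonneg
  have hmu_eq : ∀ z : ℤ, mu r θ z = (Real.exp (θ * z) / rfact r z) * (Zfun r θ)⁻¹ := by
    intro z
    rw [mu, mul_comm (Zfun r θ), ← div_div, div_eq_mul_inv]
  have hmu_sum : Summable (mu r θ) := by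
    have := hZ.mul_right (Zfun r θ)⁻¹
    exact this.congr fun z => (hmu_eq z).symm
  have hZ0 : 0 ≤ Zfun r θ :=
    tsum_nonneg fun z => div_nonneg (Real.exp_pos _).le (rfact_pos r hpos z).le
  have hmu_nonneg : ∀ z, 0 ≤ mu r θ z := fun z =>
    div_nonneg (Real.exp_pos _).le (mul_nonneg hZ0 (rfact_pos r hpos z).le)
  -- summability of mu * f
  have hg : Summable (fun z : ℤ => mu r θ z * f z) := by
    refine Summable.of_abs (Summable.of_nonneg_of_le (fun z => abs_nonneg _)
      (fun z => ?_) (hmu_sum.mul_right M))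
    rw [abs_mul, abs_of_nonneg (hmu_nonneg z)]
    exact mul_le_mul_of_nonneg_left (hM z) (hmu_nonneg z)
  -- reindexed summabilities
  have hg1 : Summable (fun z : ℤ => mu r θ (z - 1) * f (z - 1)) :=
    (Equiv.subRight (1 : ℤ)).summable_iff.mpr hg
  have hg2 : Summable (fun z : ℤ => mu r θ (z + 1) * f (z + 1)) :=
    (Equiv.addRight (1 : ℤ)).summable_iff.mpr hg
  have e1 : ∀ z : ℤ, mu r θ z * r z * f (z - 1)
      = Real.exp θ * (mu r θ (z - 1) * f (z - 1)) := by
    intro z; rw [key1 z]; ring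
  have e2 : ∀ z : ℤ, mu r θ z * r (-z) * f (z + 1)
      = Real.exp (-θ) * (mu r θ (z + 1) * f (z + 1)) := by
    intro z; rw [key2 z]; ring
  have hs1 : Summable (fun z : ℤ => mu r θ z * r z * f (z - 1)) :=
    ((hg1.mul_left (Real.exp θ)).congr fun z => (e1 z).symm)
  have hs2 : Summable (fun z : ℤ => mu r θ z * r (-z) * f (z + 1)) :=
    ((hg2.mul_left (Real.exp (-θ))).congr fun z => (e2 z).symm)
  refine ⟨hs1, hs2, hg, ?_, ?_⟩
  · calc (∑' z : ℤ, mu r θ z * r z * f (z - 1))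
        = ∑' z : ℤ, Real.exp θ * (mu r θ (z - 1) * f (z - 1)) := tsum_congr e1
      _ = Real.exp θ * ∑' z : ℤ, mu r θ (z - 1) * f (z - 1) := tsum_mul_left
      _ = Real.exp θ * ∑' z : ℤ, mu r θ z * f z := by
          congr 1
          exact (Equiv.subRight (1 : ℤ)).tsum_eq (fun z => mu r θ z * f z)
  · calc (∑' z : ℤ, mu r θ z * r (-z) * f (z + 1))
        = ∑' z : ℤ, Real.exp (-θ) * (mu r θ (z + 1) * f (z + 1)) := tsum_congr e2
      _ = Real.exp (-θ) * ∑' z : ℤ, mu r θ (z + 1) * f (z + 1) := tsum_mul_left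
      _ = Real.exp (-θ) * ∑' z : ℤ, mu r θ z * f z := by
          congr 1
          exact (Equiv.addRight (1 : ℤ)).tsum_eq (fun z => mu r θ z * f z)
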